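/- arXiv:2506.19308 — 6 statements merged into one kernel-verified Lean document; each statement's English description precedes it below -/
import Mathlib

section
/- Let A ∈ ℍ^{m×n} be a quaternion matrix with rank(A) = ν, let S₁ ∈ ℍ^{n×p} and T₁ ∈ ℍ^{q×m}, let Y ∈ ℍ^{p×q} be a {1}-inverse of T₁AS₁ (i.e. (T₁AS₁)·Y·(T₁AS₁) = T₁AS₁), and set X = S₁YT₁. Then AXA = A if and only if rank(T₁AS₁) = ν. -/
/-
If `A = A X A` then `A = (A S₁ Y)(T₁ A S₁)(Y T₁ A)`, so `rank A ≤ rank (T₁ A S₁) ≤ rank A`.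
Conversely, if `rank (T₁ A S₁) = rank A` then also `rank (T₁ A) = rank A = rank (A S₁)`, which
over a division ring lets one cancel the outer factors: `A = C T₁ A` and `A = A S₁ D` for some
`C`, `D`. Hence `A X A = C (T₁ A S₁) Y (T₁ A S₁) D = C (T₁ A S₁) D = A`.
-/

open Matrix

noncomputable section

/-- The real quaternion division ring ℍ. -/
abbrev Quat : Type := Quaternion ℝ

/-- Left range `R_l(A) = {xA : x ∈ ℍ^{1×m}} ⊆ ℍ^{1×n}`. -/
def leftRange {m n : ℕ} (A : Matrix (Fin m) (Fin n) Quat) : Set (Fin n → Quat) :=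
  {y | ∃ x : Fin m → Quat, y = Matrix.vecMul x A}

/-- Left null space `N_l(A) = {x ∈ ℍ^{1×m} : xA = 0}`. -/
def leftNull {m n : ℕ} (A : Matrix (Fin m) (Fin n) Quat) : Set (Fin m → Quat) :=
  {x | Matrix.vecMul x A = 0}

/-- Right range `R_r(A) = {Ax : x ∈ ℍ^{n×1}} ⊆ ℍ^{m×1}`. -/
def rightRange {m n : ℕ} (A : Matrix (Fin m) (Fin n) Quat) : Set (Fin m → Quat) :=
  {y | ∃ x : Fin n → Quat, y = Matrix.mulVec A x}

/-- Right null space `N_r(A) = {x ∈ ℍ^{n×1} : Ax = 0}`. -/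
def rightNull {m n : ℕ} (A : Matrix (Fin m) (Fin n) Quat) : Set (Fin n → Quat) :=
  {x | Matrix.mulVec A x = 0}

/-- The rank of a quaternion matrix: the dimension of its left range
(the left ℍ-span of its rows) as a left ℍ-vector space. -/
def qRank {m n : ℕ} (A : Matrix (Fin m) (Fin n) Quat) : ℕ :=
  Module.finrank Quat (Submodule.span Quat (Set.range (fun i : Fin m => A i)))

namespace Matrix

section Semiring

variable {R : Type*} [Semiring R] {l m n : Type*} [Fintype l] [Fintype m]

theorem vecMulLinear_mul (M : Matrix l m R) (N : Matrix m n R) :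
    (M * N).vecMulLinear = N.vecMulLinear ∘ₗ M.vecMulLinear :=
  LinearMap.ext fun x => (vecMul_vecMul x M N).symm

theorem range_vecMulLinear_mul_le (M : Matrix l m R) (N : Matrix m n R) :
    LinearMap.range (M * N).vecMulLinear ≤ LinearMap.range N.vecMulLinear := by
  rw [vecMulLinear_mul]
  exact LinearMap.range_comp_le_range _ _

theorem row_mem_range_vecMulLinear (M : Matrix m n R) (i : m) :
    M i ∈ LinearMap.range M.vecMulLinear := by
  rw [range_vecMulLinear]
  exact Submodule.subset_span ⟨i, rfl⟩

end Semiring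

section DivisionRing

variable {K : Type*} [DivisionRing K] {l m n o : Type*} [Fintype l] [Fintype m]

def rowRank (M : Matrix m n K) : ℕ :=
  Module.finrank K (LinearMap.range M.vecMulLinear)

theorem rowRank_mul_le_left (M : Matrix l m K) (N : Matrix m n K) :
    rowRank (M * N) ≤ rowRank M := by
  rw [rowRank, rowRank, vecMulLinear_mul, LinearMap.range_comp]
  exact Submodule.finrank_map_le _ _

theorem rowRank_mul_le_right (M : Matrix l m K) (N : Matrix m n K) :
    rowRank (M * N) ≤ rowRank N :=
  Submodule.finrank_mono (range_vecMulLinear_mul_le M N)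

theorem exists_mul_mul_eq_of_rowRank_mul_eq_right [Fintype n] {M : Matrix l m K}
    {N : Matrix m n K} (h : rowRank (M * N) = rowRank N) :
    ∃ C : Matrix m l K, C * (M * N) = N := by
  have hrange : LinearMap.range (M * N).vecMulLinear = LinearMap.range N.vecMulLinear :=
    Submodule.eq_of_le_of_finrank_le (range_vecMulLinear_mul_le M N) h.ge
  have hrow (i : m) : ∃ c : l → K, c ᵥ* (M * N) = N i :=
    (hrange.symm ▸ row_mem_range_vecMulLinear N i : N i ∈ LinearMap.range (M * N).vecMulLinear)
  choose C hC using hrow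
  exact ⟨of C, ext fun i => congrFun (hC i)⟩

theorem exists_mul_mul_eq_of_rowRank_mul_eq_left [Fintype n] [Fintype o] {M : Matrix m n K}
    {N : Matrix n o K} (h : rowRank (M * N) = rowRank M) :
    ∃ D : Matrix o n K, M * N * D = M := by
  -- `· ᵥ* N` is injective on the row space of `M`; extend a left inverse of it to all of `o → K`.
  classical
  set P := LinearMap.range M.vecMulLinear
  set f := N.vecMulLinear.domRestrict P
  have hker : LinearMap.ker f = ⊥ := by
    have hrange : LinearMap.range f = LinearMap.range (M * N).vecMulLinear := by
      rw [LinearMap.range_domRestrict, vecMulLinear_mul, LinearMap.range_comp]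
    have := LinearMap.finrank_range_add_finrank_ker f
    rw [hrange, ← rowRank, h, rowRank, add_eq_left] at this
    exact Submodule.finrank_eq_zero.mp this
  obtain ⟨g, hg⟩ := f.exists_leftInverse_of_injective hker
  refine ⟨LinearMap.toMatrixRight' (P.subtype ∘ₗ g), ext fun i => congrFun ?_⟩
  calc M i ᵥ* N ᵥ* LinearMap.toMatrixRight' (P.subtype ∘ₗ g)
      _ = P.subtype (g (f ⟨M i, row_mem_range_vecMulLinear M i⟩)) :=
        LinearMap.congr_fun (toLinearMapRight'.apply_symm_apply (P.subtype ∘ₗ g)) _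
      _ = M i := by rw [← LinearMap.comp_apply g f, hg, LinearMap.id_apply]; rfl

end DivisionRing

end Matrix

theorem qRank_eq_rowRank {m n : ℕ} (A : Matrix (Fin m) (Fin n) Quat) : qRank A = A.rowRank := by
  rw [qRank, rowRank, range_vecMulLinear]
  rfl

/-- Theorem 3.4 (a). -/
theorem stmt6 {m n p q ν : ℕ} (A : Matrix (Fin m) (Fin n) Quat) (hA : qRank A = ν)
    (S₁ : Matrix (Fin n) (Fin p) Quat) (T₁ : Matrix (Fin q) (Fin m) Quat)
    (Y : Matrix (Fin p) (Fin q) Quat)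
    (hY : (T₁ * A * S₁) * Y * (T₁ * A * S₁) = T₁ * A * S₁)
    (X : Matrix (Fin n) (Fin m) Quat) (hX : X = S₁ * Y * T₁) :
    A * X * A = A ↔ qRank (T₁ * A * S₁) = ν := by
  subst hX hA
  simp only [qRank_eq_rowRank]
  constructor
  · intro h
    have hfactor : A = (A * S₁ * Y) * (T₁ * A * S₁) * (Y * T₁ * A) :=
      calc A = A * (S₁ * Y * T₁) * (A * (S₁ * Y * T₁) * A) := by rw [h, h]
        _ = _ := by simp only [Matrix.mul_assoc]
    refine le_antisymm ((rowRank_mul_le_left _ S₁).trans (rowRank_mul_le_right T₁ A)) ?_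
    calc A.rowRank = rowRank ((A * S₁ * Y) * (T₁ * A * S₁) * (Y * T₁ * A)) := by rw [← hfactor]
      _ ≤ rowRank ((A * S₁ * Y) * (T₁ * A * S₁)) := rowRank_mul_le_left _ _
      _ ≤ rowRank (T₁ * A * S₁) := rowRank_mul_le_right _ _
  · intro h
    have hTA : rowRank (T₁ * A) = rowRank A :=
      le_antisymm (rowRank_mul_le_right _ _) (h ▸ rowRank_mul_le_left _ _)
    have hAS : rowRank (A * S₁) = rowRank A := by
      refine le_antisymm (rowRank_mul_le_left _ _) ?_
      rw [← h, Matrix.mul_assoc]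
      exact rowRank_mul_le_right _ _
    obtain ⟨C, hC⟩ := exists_mul_mul_eq_of_rowRank_mul_eq_right hTA
    obtain ⟨D, hD⟩ := exists_mul_mul_eq_of_rowRank_mul_eq_left hAS
    calc A * (S₁ * Y * T₁) * A = C * (T₁ * A) * (S₁ * Y * T₁) * (A * S₁ * D) := by rw [hC, hD]
      _ = C * ((T₁ * A * S₁) * Y * (T₁ * A * S₁)) * D := by simp only [Matrix.mul_assoc]
      _ = C * (T₁ * A) * S₁ * D := by rw [hY]; simp only [Matrix.mul_assoc]
      _ = A := by rw [hC, hD]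
end
end

section
/- Let A ∈ ℍ^{m×n} be a quaternion matrix, let S₁ ∈ ℍ^{n×p} and T₁ ∈ ℍ^{q×m}, let Y ∈ ℍ^{p×q} be a {1}-inverse of T₁AS₁, and set X = S₁YT₁. Then X satisfies XAX = X together with R_r(X) = R_r(S₁) if and only if rank(T₁AS₁) = rank(S₁). -/
open Matrix

noncomputable section

/-- Row span of a product is contained in the row span of the right factor. -/
lemma rowSpan_mul_le {a b c : ℕ} (M : Matrix (Fin a) (Fin b) Quat)
    (N : Matrix (Fin b) (Fin c) Quat) :
    Submodule.span Quat (Set.range fun i => (M * N) i) ≤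
      Submodule.span Quat (Set.range fun i => N i) := by
  rw [Submodule.span_le]
  rintro _ ⟨i, rfl⟩
  show (M * N) i ∈ _
  have hrow : (M * N) i = ∑ k, M i k • N k := by
    funext j
    simp [Matrix.mul_apply, Finset.sum_apply]
  rw [hrow]
  exact Submodule.sum_mem _ fun k _ =>
    Submodule.smul_mem _ _ (Submodule.subset_span ⟨k, rfl⟩)

/-- If the row span of `S` lies in the row span of `B`, then `S` factors as `Z * B`. -/
lemma exists_factor_of_rowSpan_le {a b c : ℕ} (S : Matrix (Fin a) (Fin c) Quat)
    (B : Matrix (Fin b) (Fin c) Quat)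
    (h : Submodule.span Quat (Set.range fun i => S i) ≤
      Submodule.span Quat (Set.range fun i => B i)) :
    ∃ Z : Matrix (Fin a) (Fin b) Quat, S = Z * B := by
  have h' : ∀ i, ∃ z : Fin b → Quat, ∑ k, z k • B k = S i := fun i =>
    Submodule.mem_span_range_iff_exists_fun Quat |>.mp (h (Submodule.subset_span ⟨i, rfl⟩))
  choose z hz using h'
  refine ⟨Matrix.of z, ?_⟩
  funext i j
  have := congrFun (hz i) j
  simpa [Matrix.mul_apply, Finset.sum_apply] using this.symm

/-- The right range of a product is contained in the right range of the left factor. -/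
lemma rightRange_mul_subset {a b c : ℕ} (M : Matrix (Fin a) (Fin b) Quat)
    (N : Matrix (Fin b) (Fin c) Quat) :
    rightRange (M * N) ⊆ rightRange M := by
  rintro _ ⟨x, rfl⟩
  exact ⟨N.mulVec x, by rw [Matrix.mulVec_mulVec]⟩

/-- If the right range of `S` lies in the right range of `X`, then `S = X * W`. -/
lemma exists_colFactor {a b c : ℕ} (S : Matrix (Fin a) (Fin c) Quat)
    (X : Matrix (Fin a) (Fin b) Quat)
    (h : rightRange S ⊆ rightRange X) :
    ∃ W : Matrix (Fin b) (Fin c) Quat, S = X * W := by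
  have h' : ∀ j, ∃ w : Fin b → Quat, Sᵀ j = X.mulVec w := by
    intro j
    have hmem : Sᵀ j ∈ rightRange S := ⟨Pi.single j 1, (S.mulVec_single_one j).symm⟩
    exact h hmem
  choose w hw using h'
  refine ⟨Matrix.of fun k j => w j k, ?_⟩
  funext i j
  have := congrFun (hw j) i
  simpa [Matrix.mul_apply, Matrix.mulVec, dotProduct, Matrix.transpose_apply] using this

/-- Theorem 3.4 (b). -/
theorem stmt7 {m n p q : ℕ} (A : Matrix (Fin m) (Fin n) Quat)
    (S₁ : Matrix (Fin n) (Fin p) Quat) (T₁ : Matrix (Fin q) (Fin m) Quat)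
    (Y : Matrix (Fin p) (Fin q) Quat)
    (hY : (T₁ * A * S₁) * Y * (T₁ * A * S₁) = T₁ * A * S₁)
    (X : Matrix (Fin n) (Fin m) Quat) (hX : X = S₁ * Y * T₁) :
    (X * A * X = X ∧ rightRange X = rightRange S₁) ↔
      qRank (T₁ * A * S₁) = qRank S₁ := by
  set B := T₁ * A * S₁ with hB
  have hY' : B * (Y * B) = B := by rw [← Matrix.mul_assoc]; exact hY
  have hX' : X = S₁ * (Y * T₁) := by rw [hX, Matrix.mul_assoc]
  have hBfac : B = (T₁ * A) * S₁ := by rw [hB, Matrix.mul_assoc]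
  have hBle : Submodule.span Quat (Set.range fun i => B i) ≤
      Submodule.span Quat (Set.range fun i => S₁ i) := by
    rw [hBfac]; exact rowSpan_mul_le _ _
  constructor
  · rintro ⟨hXAX, hRR⟩
    obtain ⟨W, hW⟩ := exists_colFactor S₁ X (by rw [hRR])
    have key : X * A * S₁ = S₁ := by
      calc X * A * S₁ = X * A * (X * W) := by rw [← hW]
        _ = (X * A * X) * W := by simp only [Matrix.mul_assoc]
        _ = X * W := by rw [hXAX]
        _ = S₁ := hW.symm
    have hS : S₁ = (S₁ * Y) * B := by
      conv_lhs => rw [← key, hX']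
      rw [hBfac]
      simp only [Matrix.mul_assoc]
    have hSle : Submodule.span Quat (Set.range fun i => S₁ i) ≤
        Submodule.span Quat (Set.range fun i => B i) := by
      conv_lhs => rw [hS]
      exact rowSpan_mul_le _ _
    unfold qRank
    rw [le_antisymm hBle hSle]
  · intro hrank
    have hspan : Submodule.span Quat (Set.range fun i => B i) =
        Submodule.span Quat (Set.range fun i => S₁ i) :=
      Submodule.eq_of_le_of_finrank_eq hBle hrank
    obtain ⟨Z, hZ⟩ := exists_factor_of_rowSpan_le S₁ B hspan.ge
    have h1 : X * A * S₁ = S₁ * (Y * B) := by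
      rw [hX, hB]; simp only [Matrix.mul_assoc]
    have h2 : S₁ * (Y * B) = S₁ := by
      nth_rewrite 1 [hZ]
      rw [Matrix.mul_assoc, hY', ← hZ]
    have hXAS : X * A * S₁ = S₁ := h1.trans h2
    have hXAX : X * A * X = X := by
      calc X * A * X = (X * A * S₁) * (Y * T₁) := by
            rw [hX']; simp only [Matrix.mul_assoc]
        _ = S₁ * (Y * T₁) := by rw [hXAS]
        _ = X := hX'.symm
    refine ⟨hXAX, Set.Subset.antisymm ?_ ?_⟩
    · rw [hX']; exact rightRange_mul_subset _ _
    · have hS' : S₁ = X * (A * S₁) := by rw [← Matrix.mul_assoc, hXAS]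
      conv_lhs => rw [hS']
      exact rightRange_mul_subset _ _
end
end

section
/- Let A ∈ ℍ^{m×n} be a quaternion matrix, let S₁ ∈ ℍ^{n×p} and T₁ ∈ ℍ^{q×m}, let Y ∈ ℍ^{p×q} be a {1}-inverse of T₁AS₁, and set X = S₁YT₁. Then X satisfies XAX = X together with N_r(X) = N_r(T₁) if and only if rank(T₁AS₁) = rank(T₁). -/
open Matrix

noncomputable section

/-- qRank is the finrank of the range of `vecMulLinear`. -/
lemma qRank_eq_finrank_range {k l : ℕ} (M : Matrix (Fin k) (Fin l) Quat) :
    qRank M = Module.finrank Quat (LinearMap.range M.vecMulLinear) := by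
  rw [range_vecMulLinear]
  rfl

/-- If a linear map preserves the finrank of a finite-dimensional submodule,
it is injective on that submodule. -/
lemma eq_zero_of_finrank_map_eq {V W : Type*} [AddCommGroup V] [Module Quat V]
    [AddCommGroup W] [Module Quat W]
    (f : V →ₗ[Quat] W) (p : Submodule Quat V) [FiniteDimensional Quat p]
    (h : Module.finrank Quat (p.map f) = Module.finrank Quat p)
    {v : V} (hv : v ∈ p) (hfv : f v = 0) : v = 0 := by
  have h1 := LinearMap.finrank_range_add_finrank_ker (f.domRestrict p)
  rw [LinearMap.range_domRestrict, h] at h1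
  have hker0 : Module.finrank Quat (LinearMap.ker (f.domRestrict p)) = 0 := by omega
  have hker : LinearMap.ker (f.domRestrict p) = ⊥ := Submodule.finrank_eq_zero.mp hker0
  have hmem : (⟨v, hv⟩ : p) ∈ LinearMap.ker (f.domRestrict p) := by
    simp [LinearMap.mem_ker, hfv]
  rw [hker, Submodule.mem_bot] at hmem
  simpa using Subtype.ext_iff.mp hmem

/-- Theorem 3.4 (c). -/
theorem stmt8 {m n p q : ℕ} (A : Matrix (Fin m) (Fin n) Quat)
    (S₁ : Matrix (Fin n) (Fin p) Quat) (T₁ : Matrix (Fin q) (Fin m) Quat)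
    (Y : Matrix (Fin p) (Fin q) Quat)
    (hY : (T₁ * A * S₁) * Y * (T₁ * A * S₁) = T₁ * A * S₁)
    (X : Matrix (Fin n) (Fin m) Quat) (hX : X = S₁ * Y * T₁) :
    (X * A * X = X ∧ rightNull X = rightNull T₁) ↔
      qRank (T₁ * A * S₁) = qRank T₁ := by
  -- factorization of the row-space map of T₁*A*S₁ through that of T₁
  have hfactor : (T₁ * A * S₁).vecMulLinear
      = ((A * S₁).vecMulLinear).comp T₁.vecMulLinear := by
    apply LinearMap.ext
    intro v
    simp [Matrix.vecMul_vecMul, Matrix.mul_assoc]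
  have hrange : LinearMap.range (T₁ * A * S₁).vecMulLinear
      = Submodule.map ((A * S₁).vecMulLinear) (LinearMap.range T₁.vecMulLinear) := by
    rw [hfactor, LinearMap.range_comp]
  -- The key intermediate condition
  have main : (T₁ * A * S₁) * Y * T₁ = T₁ →
      (X * A * X = X ∧ rightNull X = rightNull T₁) ∧
        qRank (T₁ * A * S₁) = qRank T₁ := by
    intro hC
    refine ⟨⟨?_, ?_⟩, ?_⟩
    · -- X * A * X = X
      rw [hX]
      calc S₁ * Y * T₁ * A * (S₁ * Y * T₁)
          = S₁ * Y * (T₁ * A * S₁ * Y * T₁) := by simp only [Matrix.mul_assoc]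
        _ = S₁ * Y * T₁ := by rw [hC]
    · -- rightNull X = rightNull T₁
      ext u
      simp only [rightNull, Set.mem_setOf_eq]
      constructor
      · intro hu
        have h2 : T₁ * A * S₁ * Y * T₁ = (T₁ * A) * X := by
          rw [hX]; simp only [Matrix.mul_assoc]
        calc T₁ *ᵥ u = ((T₁ * A) * X) *ᵥ u := by
              conv_lhs => rw [← hC]
              rw [h2]
          _ = (T₁ * A) *ᵥ (X *ᵥ u) := by rw [Matrix.mulVec_mulVec]
          _ = 0 := by rw [hu, Matrix.mulVec_zero]
      · intro hu
        rw [hX]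
        calc (S₁ * Y * T₁) *ᵥ u = (S₁ * Y) *ᵥ (T₁ *ᵥ u) := by rw [Matrix.mulVec_mulVec]
          _ = 0 := by rw [hu, Matrix.mulVec_zero]
    · -- rank equality
      apply le_antisymm
      · rw [qRank_eq_finrank_range, qRank_eq_finrank_range, hrange]
        exact Submodule.finrank_map_le _ _
      · have hfac2 : T₁.vecMulLinear
            = ((Y * T₁).vecMulLinear).comp (T₁ * A * S₁).vecMulLinear := by
          apply LinearMap.ext
          intro v
          have : T₁ * A * S₁ * (Y * T₁) = T₁ := by
            rw [← Matrix.mul_assoc, hC]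
          simp [Matrix.vecMul_vecMul, this]
        rw [qRank_eq_finrank_range, qRank_eq_finrank_range, hfac2, LinearMap.range_comp]
        exact Submodule.finrank_map_le _ _
  constructor
  · rintro ⟨hXAX, hN⟩
    -- first show T₁ * A * X = T₁ using XAX = X and the null space equality
    have hTAX : T₁ * A * X = T₁ := by
      have col : ∀ u : Fin m → Quat, (T₁ * A * X) *ᵥ u = T₁ *ᵥ u := by
        intro u
        have h1 : X *ᵥ ((A * X) *ᵥ u - u) = 0 := by
          rw [Matrix.mulVec_sub, Matrix.mulVec_mulVec, ← Matrix.mul_assoc, hXAX, sub_self]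
        have h2 : (A * X) *ᵥ u - u ∈ rightNull T₁ := by
          rw [← hN]; exact h1
        have h3 : T₁ *ᵥ ((A * X) *ᵥ u - u) = 0 := h2
        rw [Matrix.mulVec_sub, sub_eq_zero] at h3
        calc (T₁ * A * X) *ᵥ u = (T₁ * (A * X)) *ᵥ u := by rw [Matrix.mul_assoc]
          _ = T₁ *ᵥ ((A * X) *ᵥ u) := by rw [Matrix.mulVec_mulVec]
          _ = T₁ *ᵥ u := h3
      refine Matrix.ext fun i j => ?_
      have := congrFun (col (Pi.single j 1)) i
      simpa using this
    have hC : (T₁ * A * S₁) * Y * T₁ = T₁ := by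
      calc (T₁ * A * S₁) * Y * T₁ = T₁ * A * (S₁ * Y * T₁) := by
            simp only [Matrix.mul_assoc]
        _ = T₁ * A * X := by rw [hX]
        _ = T₁ := hTAX
    exact (main hC).2
  · intro hrank
    -- left null space inclusion from the rank equality
    have hNl : ∀ x : Fin q → Quat, x ᵥ* (T₁ * A * S₁) = 0 → x ᵥ* T₁ = 0 := by
      intro x hx
      have hdim : Module.finrank Quat
          ((LinearMap.range T₁.vecMulLinear).map ((A * S₁).vecMulLinear))
          = Module.finrank Quat (LinearMap.range T₁.vecMulLinear) := by
        rw [← hrange, ← qRank_eq_finrank_range, ← qRank_eq_finrank_range, hrank]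
      have hmem : x ᵥ* T₁ ∈ LinearMap.range T₁.vecMulLinear :=
        ⟨x, rfl⟩
      have hzero : (A * S₁).vecMulLinear (x ᵥ* T₁) = 0 := by
        have : (x ᵥ* T₁) ᵥ* (A * S₁) = x ᵥ* (T₁ * A * S₁) := by
          rw [Matrix.vecMul_vecMul, Matrix.mul_assoc]
        simpa [this] using hx
      exact eq_zero_of_finrank_map_eq ((A * S₁).vecMulLinear) _ hdim hmem hzero
    -- derive the key condition
    have hC : (T₁ * A * S₁) * Y * T₁ = T₁ := by
      have row : ∀ x : Fin q → Quat,
          x ᵥ* ((T₁ * A * S₁) * Y * T₁) = x ᵥ* T₁ := by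
        intro x
        have h0 : (x ᵥ* (T₁ * A * S₁ * Y) - x) ᵥ* (T₁ * A * S₁) = 0 := by
          rw [Matrix.sub_vecMul, Matrix.vecMul_vecMul, hY, sub_self]
        have h1 := hNl _ h0
        rw [Matrix.sub_vecMul, sub_eq_zero, Matrix.vecMul_vecMul] at h1
        exact h1
      refine Matrix.ext fun i j => ?_
      have := congrFun (row (Pi.single i 1)) j
      simpa using this
    exact (main hC).1
end
end

section
/- Let A ∈ ℍ^{m×n} be a quaternion matrix and let Y ∈ ℍ^{m×n} be a {1}-inverse of A*AA* (i.e. (A*AA*)·Y·(A*AA*) = A*AA*). Then the matrix X = A*·Y·A* ∈ ℍ^{n×m} satisfies the four Penrose equations: AXA = A, XAX = X, (AX)* = AX, and (XA)* = XA; in particular, X is the Moore–Penrose inverse of A. -/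
open Matrix

noncomputable section

/-!
Over `ℍ` a matrix `B` with `B * Bᴴ = 0` vanishes, since the diagonal entries of `B * Bᴴ` are sums
of squared norms. Hence `A * Aᴴ`, and then `Aᴴ * A * Aᴴ`, can be cancelled from either side of a
matrix equation. Cancelling `G = Aᴴ * A * Aᴴ` from `G * Y * G = G` gives `Aᴴ * A * X = Aᴴ` and
`X * A * Aᴴ = Aᴴ`. In any star ring the first makes `A * X` Hermitian and `A * X * A = A`, the
second makes `X * A` Hermitian, and `X * A * X = (X * A * Aᴴ) * Y * Aᴴ = X`.
-/

namespace Matrix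

variable {α : Type*} [NonUnitalSemiring α] [StarRing α] {m n : Type*} [Fintype m] [Fintype n]

theorem isHermitian_mul_of_conjTranspose_mul_self_mul_eq {A : Matrix m n α} {X : Matrix n m α}
    (h : Aᴴ * A * X = Aᴴ) : (A * X).IsHermitian := by
  have hgram : (A * X)ᴴ = (A * X)ᴴ * (A * X) :=
    calc (A * X)ᴴ = Xᴴ * Aᴴ := conjTranspose_mul A X
      _ = (A * X)ᴴ * (A * X) := by rw [← h, conjTranspose_mul]; simp only [Matrix.mul_assoc]
  exact isHermitian_conjTranspose_iff.mp (hgram ▸ isHermitian_conjTranspose_mul_self (A * X))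

theorem mul_mul_eq_self_of_conjTranspose_mul_self_mul_eq {A : Matrix m n α} {X : Matrix n m α}
    (h : Aᴴ * A * X = Aᴴ) : A * X * A = A :=
  calc A * X * A = (A * X)ᴴ * A := by rw [isHermitian_mul_of_conjTranspose_mul_self_mul_eq h]
    _ = (Aᴴ * A * X)ᴴ := by
      simp only [conjTranspose_mul, conjTranspose_conjTranspose, Matrix.mul_assoc]
    _ = A := by rw [h, conjTranspose_conjTranspose]

theorem isHermitian_mul_of_mul_mul_conjTranspose_eq {A : Matrix m n α} {X : Matrix n m α}
    (h : X * A * Aᴴ = Aᴴ) : (X * A).IsHermitian := by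
  have hgram : (X * A)ᴴ = (X * A) * (X * A)ᴴ :=
    calc (X * A)ᴴ = Aᴴ * Xᴴ := conjTranspose_mul X A
      _ = (X * A) * (X * A)ᴴ := by rw [← h, conjTranspose_mul]; simp only [Matrix.mul_assoc]
  exact isHermitian_conjTranspose_iff.mp (hgram ▸ isHermitian_mul_conjTranspose_self (X * A))

end Matrix

namespace Quaternion

variable {R : Type*} [CommRing R] [LinearOrder R] [IsStrictOrderedRing R]
  {l m n : Type*} [Fintype m] [Fintype n]

-- `Matrix.self_mul_conjTranspose_eq_zero` needs a `StarOrderedRing`, which `ℍ[R]` is not.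
theorem dotProduct_self_star_eq_zero {v : n → ℍ[R]} : v ⬝ᵥ star v = 0 ↔ v = 0 := by
  have hnormSq : v ⬝ᵥ star v = ((∑ i, normSq (v i) : R) : ℍ[R]) := by
    simp [dotProduct, self_mul_star, ← algebraMap_def, map_sum]
  rw [hnormSq, ← coe_zero, coe_inj, Fintype.sum_eq_zero_iff_of_nonneg fun _ => normSq_nonneg]
  simp [funext_iff]

theorem self_mul_conjTranspose_eq_zero {A : Matrix l n ℍ[R]} : A * Aᴴ = 0 ↔ A = 0 := by
  refine ⟨fun h => Matrix.ext fun i j => ?_, fun h => h ▸ Matrix.zero_mul _⟩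
  exact congr_fun (dotProduct_self_star_eq_zero.mp (congr_fun₂ h i i)) j

theorem mul_cancel_right_self_mul_conjTranspose {A : Matrix m n ℍ[R]} {B C : Matrix l m ℍ[R]}
    (h : B * (A * Aᴴ) = C * (A * Aᴴ)) : B * A = C * A := by
  rw [← sub_eq_zero, ← self_mul_conjTranspose_eq_zero]
  calc (B * A - C * A) * (B * A - C * A)ᴴ = (B * (A * Aᴴ) - C * (A * Aᴴ)) * (B - C)ᴴ := by
        simp only [← Matrix.sub_mul, conjTranspose_mul, Matrix.mul_assoc]
    _ = 0 := by rw [h, sub_self, Matrix.zero_mul]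

theorem mul_cancel_right_mul_conjTranspose_mul {M : Matrix m n ℍ[R]} {P Q : Matrix l m ℍ[R]}
    (h : P * (M * Mᴴ * M) = Q * (M * Mᴴ * M)) : P * M = Q * M := by
  have hMMh : P * M * Mᴴ = Q * M * Mᴴ := by
    simpa only [conjTranspose_conjTranspose, Matrix.mul_assoc] using
      mul_cancel_right_self_mul_conjTranspose (A := Mᴴ) (B := P * M) (C := Q * M)
        (by simpa only [conjTranspose_conjTranspose, Matrix.mul_assoc] using h)
  exact mul_cancel_right_self_mul_conjTranspose (by simpa only [Matrix.mul_assoc] using hMMh)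

theorem mul_cancel_left_mul_conjTranspose_mul {M : Matrix m n ℍ[R]} {P Q : Matrix n l ℍ[R]}
    (h : M * Mᴴ * M * P = M * Mᴴ * M * Q) : M * P = M * Q := by
  have := mul_cancel_right_mul_conjTranspose_mul (M := Mᴴ) (P := Pᴴ) (Q := Qᴴ)
    (by simpa only [conjTranspose_mul, conjTranspose_conjTranspose, Matrix.mul_assoc]
      using congrArg conjTranspose h)
  simpa only [conjTranspose_mul, conjTranspose_conjTranspose] using congrArg conjTranspose this

end Quaternion

/-- Theorem 3.7: `A* ((A* A A*)⁽¹⁾) A*` satisfies the four Penrose equations,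
hence is the Moore–Penrose inverse of `A`. -/
theorem stmt13 {m n : ℕ} (A : Matrix (Fin m) (Fin n) Quat)
    (Y : Matrix (Fin m) (Fin n) Quat)
    (hY : (Aᴴ * A * Aᴴ) * Y * (Aᴴ * A * Aᴴ) = Aᴴ * A * Aᴴ)
    (X : Matrix (Fin n) (Fin m) Quat) (hX : X = Aᴴ * Y * Aᴴ) :
    A * X * A = A ∧ X * A * X = X ∧ (A * X)ᴴ = A * X ∧ (X * A)ᴴ = X * A := by
  subst hX
  have hG : Aᴴ * Aᴴᴴ * Aᴴ = Aᴴ * A * Aᴴ := by rw [conjTranspose_conjTranspose]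
  have hAX : Aᴴ * A * (Aᴴ * Y * Aᴴ) = Aᴴ := by
    have h := Quaternion.mul_cancel_right_mul_conjTranspose_mul (M := Aᴴ)
      (P := Aᴴ * A * Aᴴ * Y) (Q := 1) (by rw [hG, Matrix.one_mul, hY])
    simpa only [Matrix.mul_assoc, Matrix.one_mul] using h
  have hXA : Aᴴ * Y * Aᴴ * A * Aᴴ = Aᴴ := by
    have h := Quaternion.mul_cancel_left_mul_conjTranspose_mul (M := Aᴴ)
      (P := Y * (Aᴴ * A * Aᴴ)) (Q := 1) (by rw [hG, Matrix.mul_one, ← Matrix.mul_assoc, hY])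
    simpa only [Matrix.mul_assoc, Matrix.mul_one] using h
  refine ⟨mul_mul_eq_self_of_conjTranspose_mul_self_mul_eq hAX, ?_,
    isHermitian_mul_of_conjTranspose_mul_self_mul_eq hAX,
    isHermitian_mul_of_mul_mul_conjTranspose_eq hXA⟩
  calc Aᴴ * Y * Aᴴ * A * (Aᴴ * Y * Aᴴ) = Aᴴ * Y * Aᴴ * A * Aᴴ * Y * Aᴴ := by
        simp only [Matrix.mul_assoc]
    _ = Aᴴ * Y * Aᴴ := by rw [hXA]
end
end

section
/- Let A ∈ ℍ^{m×n} be a quaternion matrix with rank(A) = ν, and let W₁ ∈ ℍ^{n×m} with rank(W₁) = s ≤ ν. Let W₁ = S₁T₁ be a full rank factorization of W₁, i.e. S₁ ∈ ℍ^{n×s} and T₁ ∈ ℍ^{s×m} with rank(S₁) = rank(T₁) = s. Suppose there exists X₀ ∈ ℍ^{n×m} with X₀AX₀ = X₀, R_r(X₀) = R_r(W₁), and N_r(X₀) = N_r(W₁). Then: (a) the s×s quaternion matrix T₁AS₁ is invertible; (b) X₀ = S₁·(T₁AS₁)^{−1}·T₁, and this matrix also satisfies R_r(X₀) = R_r(S₁)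 and N_r(X₀) =N_r(T₁). -/
open Matrix

noncomputable section

/-! A full rank factorization `W₁ = S₁ T₁` makes `S₁` left invertible and `T₁` right invertible,
`L S₁ = 1 = T₁ R`: the rows of `S₁` span `ℍ^{1×s}`, and the rows of `T₁` are left linearly
independent, so `v ↦ v T₁` has a linear left inverse, which is right multiplication by some `R`.
Hence `R_r(W₁) = R_r(S₁)` and `N_r(W₁) = N_r(T₁)`, and the range and null space conditions on `X₀`
become the identities `S₁ L X₀ = X₀`, `X₀ Y = S₁`, `X₀ R T₁ = X₀` and `T₁ A X₀ = T₁`.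
With `X₀ A X₀ = X₀` these show that `L X₀ R` is a two-sided inverse of `T₁ A S₁`, and that
any left inverse `Q` of `T₁ A S₁` gives `S₁ Q T₁ = S₁ Q T₁ A S₁ L X₀ = S₁ L X₀ = X₀`. -/

namespace Matrix

variable {α : Type*} {k m n : Type*} [Fintype k] [Fintype m] [Fintype n]

theorem exists_mul_eq_one_of_span_row_eq_top [Semiring α] [DecidableEq n] {S : Matrix m n α}
    (h : Submodule.span α (Set.range S.row) = ⊤) : ∃ L : Matrix n m α, L * S = 1 := by
  rw [← vecMul_surjective_iff_exists_left_inverse, ← coe_vecMulLinear, ← LinearMap.range_eq_top,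
    range_vecMulLinear, h]

theorem exists_mul_eq_one_of_linearIndependent_row [DivisionRing α] [DecidableEq k] [DecidableEq m]
    {T : Matrix k m α} (h : LinearIndependent α T.row) : ∃ R : Matrix m k α, T * R = 1 := by
  obtain ⟨g, hg⟩ := T.toLinearMapRight'.exists_leftInverse_of_injective
    (LinearMap.ker_eq_bot.2 (vecMul_injective_iff.2 h))
  refine ⟨LinearMap.toMatrixRight' g, toLinearMapRight'.injective ?_⟩
  rw [toLinearMapRight'_mul, toLinearMapRight'_one, LinearEquiv.symm_apply_apply]
  exact hg

end Matrix

theorem exists_mul_eq_one_of_qRank_eq_cols {k l : ℕ} {S : Matrix (Fin k) (Fin l) Quat}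
    (h : qRank S = l) : ∃ L : Matrix (Fin l) (Fin k) Quat, L * S = 1 :=
  Matrix.exists_mul_eq_one_of_span_row_eq_top <| Submodule.eq_top_of_finrank_eq <| by
    rw [Module.finrank_fin_fun]; exact h

theorem exists_mul_eq_one_of_qRank_eq_rows {k l : ℕ} {T : Matrix (Fin k) (Fin l) Quat}
    (h : qRank T = k) : ∃ R : Matrix (Fin l) (Fin k) Quat, T * R = 1 :=
  Matrix.exists_mul_eq_one_of_linearIndependent_row <|
    linearIndependent_iff_card_eq_finrank_span.2 <| by rw [Fintype.card_fin]; exact h.symm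

section RangeNull

variable {k l p : ℕ}

theorem rightRange_mul_subset_s18 (A : Matrix (Fin k) (Fin l) Quat) (B : Matrix (Fin l) (Fin p) Quat) :
    rightRange (A * B) ⊆ rightRange A := by
  rintro _ ⟨x, rfl⟩
  exact ⟨B *ᵥ x, (mulVec_mulVec x A B).symm⟩

theorem rightNull_subset_rightNull_mul (A : Matrix (Fin k) (Fin l) Quat)
    (B : Matrix (Fin l) (Fin p) Quat) : rightNull B ⊆ rightNull (A * B) := by
  intro x hx
  change (A * B) *ᵥ x = 0
  rw [← mulVec_mulVec, hx, mulVec_zero]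

theorem rightRange_mul_eq_of_mul_eq_one {A : Matrix (Fin k) (Fin l) Quat}
    {B : Matrix (Fin l) (Fin p) Quat} {C : Matrix (Fin p) (Fin l) Quat} (hBC : B * C = 1) :
    rightRange (A * B) = rightRange A := by
  refine (rightRange_mul_subset_s18 A B).antisymm ?_
  simpa only [Matrix.mul_assoc, hBC, Matrix.mul_one] using rightRange_mul_subset_s18 (A * B) C

theorem rightNull_mul_eq_of_mul_eq_one {A : Matrix (Fin k) (Fin l) Quat}
    {B : Matrix (Fin l) (Fin p) Quat} {C : Matrix (Fin l) (Fin k) Quat} (hCA : C * A = 1) :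
    rightNull (A * B) = rightNull B := by
  refine subset_antisymm ?_ (rightNull_subset_rightNull_mul A B)
  simpa only [← Matrix.mul_assoc, hCA, Matrix.one_mul] using
    rightNull_subset_rightNull_mul C (A * B)

theorem exists_mul_eq_of_rightRange_subset {A : Matrix (Fin k) (Fin l) Quat}
    {B : Matrix (Fin k) (Fin p) Quat} (h : rightRange B ⊆ rightRange A) :
    ∃ U : Matrix (Fin l) (Fin p) Quat, A * U = B := by
  choose cols hcols using fun j => h ⟨Pi.single j 1, rfl⟩
  refine ⟨(of cols)ᵀ, ext_of_mulVec_single fun j => ?_⟩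
  rw [← mulVec_mulVec, hcols j, mulVec_single_one]
  rfl

theorem mul_eq_self_of_rightNull_subset {A : Matrix (Fin k) (Fin l) Quat}
    {B : Matrix (Fin p) (Fin l) Quat} (h : rightNull A ⊆ rightNull B)
    {P : Matrix (Fin l) (Fin l) Quat} (hAP : A * P = A) : B * P = B := by
  refine ext_of_mulVec_single fun j => ?_
  have hA : P *ᵥ Pi.single j 1 - Pi.single j 1 ∈ rightNull A := by
    change A *ᵥ _ = 0
    rw [mulVec_sub, mulVec_mulVec, hAP, sub_self]
  have hB : B *ᵥ (P *ᵥ Pi.single j 1 - Pi.single j 1) = 0 := h hA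
  rwa [mulVec_sub, sub_eq_zero, mulVec_mulVec] at hB

theorem mul_mul_eq_self_of_rightRange_subset {S : Matrix (Fin k) (Fin l) Quat}
    {L : Matrix (Fin l) (Fin k) Quat} {X : Matrix (Fin k) (Fin p) Quat} (hL : L * S = 1)
    (h : rightRange X ⊆ rightRange S) : S * L * X = X := by
  obtain ⟨U, rfl⟩ := exists_mul_eq_of_rightRange_subset h
  rw [Matrix.mul_assoc, ← Matrix.mul_assoc L, hL, Matrix.one_mul]

end RangeNull

namespace Matrix

section OuterInverse

variable {α : Type*} [Ring α] {k m n : Type*} [Fintype k] [Fintype m] [Fintype n] [DecidableEq k]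
  {A : Matrix m n α} {X : Matrix n m α} {S : Matrix n k α} {T : Matrix k m α}

theorem mul_eq_one_of_outer_inverse {L : Matrix k n α} {R : Matrix m k α} (hR : T * R = 1)
    (hSLX : S * L * X = X) (hTAX : T * (A * X) = T) : T * A * S * (L * X * R) = 1 := by
  calc T * A * S * (L * X * R) = T * (A * (S * L * X)) * R := by simp only [Matrix.mul_assoc]
    _ = 1 := by rw [hSLX, hTAX, hR]

theorem eq_one_of_outer_inverse_mul {L : Matrix k n α} {R : Matrix m k α}
    {Y : Matrix m k α} (hX : X * A * X = X) (hL : L * S = 1) (hXY : X * Y = S)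
    (hXRT : X * (R * T) = X) : L * X * R * (T * A * S) = 1 := by
  calc L * X * R * (T * A * S) = L * (X * (R * T)) * A * (X * Y) := by
        simp only [hXY, Matrix.mul_assoc]
    _ = L * (X * A * X) * Y := by simp only [hXRT, Matrix.mul_assoc]
    _ = 1 := by rw [hX, Matrix.mul_assoc, hXY, hL]

theorem eq_mul_mul_of_outer_inverse {L : Matrix k n α} {Q : Matrix k k α}
    (hQ : Q * (T * A * S) = 1) (hSLX : S * L * X = X) (hTAX : T * (A * X) = T) :
    X = S * Q * T := by
  calc X = S * (Q * (T * A * S)) * L * X := by rw [hQ, Matrix.mul_one, hSLX]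
    _ = S * Q * (T * (A * (S * L * X))) := by simp only [Matrix.mul_assoc]
    _ = S * Q * T := by rw [hSLX, hTAX]

end OuterInverse

end Matrix

theorem stmt18_general {m n s : ℕ} (A : Matrix (Fin m) (Fin n) Quat)
    (W₁ : Matrix (Fin n) (Fin m) Quat)
    (S₁ : Matrix (Fin n) (Fin s) Quat) (T₁ : Matrix (Fin s) (Fin m) Quat)
    (hST : W₁ = S₁ * T₁) (hS : qRank S₁ = s) (hT : qRank T₁ = s)
    (X₀ : Matrix (Fin n) (Fin m) Quat)
    (h1 : X₀ * A * X₀ = X₀) (h2 : rightRange X₀ = rightRange W₁)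
    (h3 : rightNull X₀ = rightNull W₁) :
    (∃ Q : Matrix (Fin s) (Fin s) Quat, (T₁ * A * S₁) * Q = 1 ∧ Q * (T₁ * A * S₁) = 1) ∧
    (∀ Q : Matrix (Fin s) (Fin s) Quat, (T₁ * A * S₁) * Q = 1 → Q * (T₁ * A * S₁) = 1 →
      X₀ = S₁ * Q * T₁ ∧ rightRange X₀ = rightRange S₁ ∧ rightNull X₀ = rightNull T₁) := by
  obtain ⟨L, hL⟩ := exists_mul_eq_one_of_qRank_eq_cols hS
  obtain ⟨R, hR⟩ := exists_mul_eq_one_of_qRank_eq_rows hT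
  have hRange : rightRange X₀ = rightRange S₁ := h2.trans (hST ▸ rightRange_mul_eq_of_mul_eq_one hR)
  have hNull : rightNull X₀ = rightNull T₁ := h3.trans (hST ▸ rightNull_mul_eq_of_mul_eq_one hL)
  have hSLX : S₁ * L * X₀ = X₀ := mul_mul_eq_self_of_rightRange_subset hL hRange.le
  obtain ⟨Y, hXY⟩ := exists_mul_eq_of_rightRange_subset hRange.ge
  have hXRT : X₀ * (R * T₁) = X₀ :=
    mul_eq_self_of_rightNull_subset hNull.ge (by rw [← Matrix.mul_assoc, hR, Matrix.one_mul])
  have hTAX : T₁ * (A * X₀) = T₁ :=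
    mul_eq_self_of_rightNull_subset hNull.le (by rw [← Matrix.mul_assoc, h1])
  refine ⟨⟨L * X₀ * R, mul_eq_one_of_outer_inverse hR hSLX hTAX,
    eq_one_of_outer_inverse_mul h1 hL hXY hXRT⟩, fun Q _ hQ => ?_⟩
  exact ⟨eq_mul_mul_of_outer_inverse hQ hSLX hTAX, hRange, hNull⟩

/-- Theorem 3.10: representation of `A^{(2)}_{r,(W₁,W₁)}` via a full rank
factorization `W₁ = S₁ T₁`. -/
theorem stmt18 {m n ν s : ℕ} (A : Matrix (Fin m) (Fin n) Quat) (hA : qRank A = ν)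
    (W₁ : Matrix (Fin n) (Fin m) Quat) (hW : qRank W₁ = s) (hsν : s ≤ ν)
    (S₁ : Matrix (Fin n) (Fin s) Quat) (T₁ : Matrix (Fin s) (Fin m) Quat)
    (hST : W₁ = S₁ * T₁) (hS : qRank S₁ = s) (hT : qRank T₁ = s)
    (X₀ : Matrix (Fin n) (Fin m) Quat)
    (h1 : X₀ * A * X₀ = X₀) (h2 : rightRange X₀ = rightRange W₁)
    (h3 : rightNull X₀ = rightNull W₁) :
    (∃ Q : Matrix (Fin s) (Fin s) Quat, (T₁ * A * S₁) * Q = 1 ∧ Q * (T₁ * A * S₁) = 1) ∧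
    (∀ Q : Matrix (Fin s) (Fin s) Quat, (T₁ * A * S₁) * Q = 1 → Q * (T₁ * A * S₁) = 1 →
      X₀ = S₁ * Q * T₁ ∧ rightRange X₀ = rightRange S₁ ∧ rightNull X₀ = rightNull T₁) :=
  stmt18_general A W₁ S₁ T₁ hST hS hT X₀ h1 h2 h3
end
end

section
/- Let A ∈ ℍ^{m×n} be a quaternion matrix with rank(A) = ν, and let W₂ ∈ ℍ^{n×m} with rank(W₂) = t ≤ ν. Let W₂ = T₂S₂ be a full rank factorization of W₂, i.e. T₂ ∈ ℍ^{n×t} and S₂ ∈ ℍ^{t×m} with rank(T₂) = rank(S₂) = t. Suppose there exists X₀ ∈ ℍ^{n×m} with X₀AX₀ = X₀, R_l(X₀) = R_l(W₂), and N_l(X₀) = N_l(W₂). Then: (a) the t×t quaternion matrix S₂AT₂ is invertible; (b) X₀ = T₂·(S₂AT₂)^{−1}·S₂, and this matrix also satisfies R_l(X₀) = R_l(S₂) and N_l(X₀) = N_l(T₂). -/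
open Matrix

noncomputable section

section Helpers

variable {m n p : ℕ}

lemma vecMul_eq_sum' (x : Fin m → Quat) (A : Matrix (Fin m) (Fin n) Quat) :
    Matrix.vecMul x A = ∑ i, x i • A i := by
  funext j
  simp [Matrix.vecMul, dotProduct, Finset.sum_apply]

lemma single_vecMul' (i : Fin m) (A : Matrix (Fin m) (Fin n) Quat) :
    Matrix.vecMul (Pi.single i 1) A = A i := by
  funext j
  simp [Matrix.vecMul, dotProduct, Pi.single_apply]

/-- `x ↦ x A` as a left `ℍ`-linear map. -/
def vl (A : Matrix (Fin m) (Fin n) Quat) : (Fin m → Quat) →ₗ[Quat] (Fin n → Quat) where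
  toFun x := Matrix.vecMul x A
  map_add' x y := by
    funext j
    simp [Matrix.vecMul, dotProduct, add_mul, Finset.sum_add_distrib]
  map_smul' c x := by
    funext j
    simp [Matrix.vecMul, dotProduct, Finset.mul_sum, mul_assoc]

@[simp] lemma vl_apply (A : Matrix (Fin m) (Fin n) Quat) (x : Fin m → Quat) :
    vl A x = Matrix.vecMul x A := rfl

lemma range_vl (A : Matrix (Fin m) (Fin n) Quat) :
    LinearMap.range (vl A) = Submodule.span Quat (Set.range fun i => A i) := by
  apply le_antisymm
  · rintro y ⟨x, rfl⟩
    show Matrix.vecMul x A ∈ _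
    rw [vecMul_eq_sum']
    exact Submodule.sum_mem _ fun i _ =>
      Submodule.smul_mem _ _ (Submodule.subset_span ⟨i, rfl⟩)
  · rw [Submodule.span_le]
    rintro y ⟨i, rfl⟩
    exact ⟨Pi.single i 1, single_vecMul' i A⟩

lemma qRank_eq_finrank_range_s19 (A : Matrix (Fin m) (Fin n) Quat) :
    qRank A = Module.finrank Quat (LinearMap.range (vl A)) := by
  rw [range_vl]; rfl

lemma vl_inj_of_rank (A : Matrix (Fin m) (Fin n) Quat) (h : qRank A = m) :
    ∀ x : Fin m → Quat, Matrix.vecMul x A = 0 → x = 0 := by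
  have h1 := LinearMap.finrank_range_add_finrank_ker (vl A)
  rw [← qRank_eq_finrank_range_s19, h, Module.finrank_pi, Fintype.card_fin] at h1
  have hk : Module.finrank Quat (LinearMap.ker (vl A)) = 0 := by omega
  have hbot : LinearMap.ker (vl A) = ⊥ := Submodule.finrank_eq_zero.mp hk
  intro x hx
  have hmem : x ∈ LinearMap.ker (vl A) := by simpa using hx
  rw [hbot] at hmem
  simpa using hmem

lemma vl_surj_of_rank (A : Matrix (Fin m) (Fin n) Quat) (h : qRank A = n) :
    Function.Surjective (vl A) := by
  rw [← LinearMap.range_eq_top]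
  apply Submodule.eq_top_of_finrank_eq
  rw [← qRank_eq_finrank_range_s19, h, Module.finrank_pi, Fintype.card_fin]

lemma mul_row (A : Matrix (Fin m) (Fin n) Quat) (B : Matrix (Fin n) (Fin p) Quat) (i : Fin m) :
    (A * B) i = Matrix.vecMul (A i) B := by
  funext j
  simp [Matrix.mul_apply, Matrix.vecMul, dotProduct]

lemma one_row (i : Fin m) : (1 : Matrix (Fin m) (Fin m) Quat) i = Pi.single i 1 := by
  funext j
  simp [Matrix.one_apply, Pi.single_apply, eq_comm]

lemma sum_single_smul (y : Fin m → Quat) : (∑ k, y k • (Pi.single k (1 : Quat) : Fin m → Quat)) = y := by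
  funext j
  simp [Finset.sum_apply, Pi.single_apply]

/-- A right inverse of a square quaternion matrix is a left inverse. -/
lemma mul_one_comm' {k : ℕ} (M N : Matrix (Fin k) (Fin k) Quat) (h : M * N = 1) :
    N * M = 1 := by
  have hcomp : ∀ x : Fin k → Quat, Matrix.vecMul (Matrix.vecMul x M) N = x := by
    intro x
    rw [Matrix.vecMul_vecMul, h, Matrix.vecMul_one]
  have hinj : Function.Injective (vl M) := by
    intro a b hab
    have h2 := congrArg (fun y => Matrix.vecMul y N) hab
    simpa [hcomp] using h2
  have hsurj : Function.Surjective (vl M) :=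
    (LinearMap.injective_iff_surjective_of_finrank_eq_finrank rfl).mp hinj
  have key : ∀ x : Fin k → Quat, Matrix.vecMul x (N * M) = x := by
    intro x
    obtain ⟨y, hy⟩ := hsurj x
    simp only [vl_apply] at hy
    rw [← Matrix.vecMul_vecMul, ← hy, hcomp, hy]
  apply Matrix.ext
  intro i j
  have h3 := key (Pi.single i 1)
  rw [single_vecMul'] at h3
  rw [one_row]
  exact congrFun h3 j

end Helpers

/-- Theorem 3.11: representation of `A^{(2)}_{l,(W₂,W₂)}` via a full rank
factorization `W₂ = T₂ S₂`. -/
theorem stmt19 {m n ν t : ℕ} (A : Matrix (Fin m) (Fin n) Quat) (hA : qRank A = ν)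
    (W₂ : Matrix (Fin n) (Fin m) Quat) (hW : qRank W₂ = t) (htν : t ≤ ν)
    (T₂ : Matrix (Fin n) (Fin t) Quat) (S₂ : Matrix (Fin t) (Fin m) Quat)
    (hTS : W₂ = T₂ * S₂) (hT : qRank T₂ = t) (hS : qRank S₂ = t)
    (X₀ : Matrix (Fin n) (Fin m) Quat)
    (h1 : X₀ * A * X₀ = X₀) (h2 : leftRange X₀ = leftRange W₂)
    (h3 : leftNull X₀ = leftNull W₂) :
    (∃ Q : Matrix (Fin t) (Fin t) Quat, (S₂ * A * T₂) * Q = 1 ∧ Q * (S₂ * A * T₂) = 1) ∧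
    (∀ Q : Matrix (Fin t) (Fin t) Quat, (S₂ * A * T₂) * Q = 1 → Q * (S₂ * A * T₂) = 1 →
      X₀ = T₂ * Q * S₂ ∧ leftRange X₀ = leftRange S₂ ∧ leftNull X₀ = leftNull T₂) := by
  classical
  have hSinj : ∀ y : Fin t → Quat, Matrix.vecMul y S₂ = 0 → y = 0 := vl_inj_of_rank S₂ hS
  have hTsurj : Function.Surjective (vl T₂) := vl_surj_of_rank T₂ hT
  -- cancellation of S₂ on the right at the matrix level
  have hcan : ∀ {k : ℕ} (M N : Matrix (Fin k) (Fin t) Quat), M * S₂ = N * S₂ → M = N := by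
    intro k M N h
    apply Matrix.ext
    intro i j
    have hrow : Matrix.vecMul (M i) S₂ = Matrix.vecMul (N i) S₂ := by
      rw [← mul_row, ← mul_row, h]
    have hz : Matrix.vecMul (M i - N i) S₂ = 0 := by
      have := map_sub (vl S₂) (M i) (N i)
      simp only [vl_apply] at this
      rw [this, hrow, sub_self]
    have h0 : M i - N i = 0 := hSinj _ hz
    simpa [sub_eq_zero] using congrFun h0 j
  -- rows of X₀ factor through S₂
  have hrowX : ∀ i, ∃ b : Fin t → Quat, X₀ i = Matrix.vecMul b S₂ := by
    intro i
    have hx : X₀ i ∈ leftRange X₀ := ⟨Pi.single i 1, (single_vecMul' i X₀).symm⟩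
    rw [h2] at hx
    obtain ⟨x, hx⟩ := hx
    exact ⟨Matrix.vecMul x T₂, by rw [hx, hTS, ← Matrix.vecMul_vecMul]⟩
  choose B0 hB using hrowX
  set B : Matrix (Fin n) (Fin t) Quat := Matrix.of B0 with hBdef
  have hB : ∀ i, X₀ i = Matrix.vecMul (B i) S₂ := hB
  have hXB : X₀ = B * S₂ := by
    apply Matrix.ext
    intro i j
    rw [show (B * S₂) i = Matrix.vecMul (B i) S₂ from mul_row B S₂ i, ← hB i]
  -- left null spaces
  have hNT : leftNull X₀ = leftNull T₂ := by
    rw [h3]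
    ext x
    simp only [leftNull, Set.mem_setOf_eq, hTS, ← Matrix.vecMul_vecMul]
    constructor
    · intro h; exact hSinj _ h
    · intro h; rw [h, Matrix.zero_vecMul]
  have hNB : leftNull B = leftNull T₂ := by
    rw [← hNT]
    ext x
    simp only [leftNull, Set.mem_setOf_eq, hXB, ← Matrix.vecMul_vecMul]
    constructor
    · intro h; rw [h, Matrix.zero_vecMul]
    · intro h; exact hSinj _ h
  -- B has full rank t: vl B is surjective
  have hker : LinearMap.ker (vl B) = LinearMap.ker (vl T₂) := by
    ext x
    have := Set.ext_iff.mp hNB x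
    simpa [leftNull, LinearMap.mem_ker] using this
  have hBsurj : Function.Surjective (vl B) := by
    rw [← LinearMap.range_eq_top]
    apply Submodule.eq_top_of_finrank_eq
    have h1' := LinearMap.finrank_range_add_finrank_ker (vl B)
    have h2' := LinearMap.finrank_range_add_finrank_ker (vl T₂)
    have hrT : Module.finrank Quat (LinearMap.range (vl T₂)) = t := by
      rw [← qRank_eq_finrank_range_s19, hT]
    rw [hker] at h1'
    rw [Module.finrank_pi, Fintype.card_fin] at h1' h2' ⊢
    omega
  -- S₂ A B = 1
  have hD : S₂ * A * B = 1 := by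
    have h5 : B * (S₂ * A * B) = B := by
      apply hcan
      calc (B * (S₂ * A * B)) * S₂ = (B * S₂) * A * (B * S₂) := by
            simp only [Matrix.mul_assoc]
        _ = X₀ * A * X₀ := by rw [← hXB]
        _ = X₀ := h1
        _ = B * S₂ := hXB
    have key : ∀ y : Fin t → Quat, Matrix.vecMul y (S₂ * A * B) = y := by
      intro y
      obtain ⟨x, hx⟩ := hBsurj y
      simp only [vl_apply] at hx
      rw [← hx, Matrix.vecMul_vecMul, h5]
    apply Matrix.ext
    intro i j
    have h3' := key (Pi.single i 1)
    rw [single_vecMul'] at h3'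
    rw [one_row]
    exact congrFun h3' j
  -- construct C with B = T₂ * C
  choose u hu using fun k : Fin t => hTsurj (Pi.single k 1)
  simp only [vl_apply] at hu
  set C : Matrix (Fin t) (Fin t) Quat := fun k => Matrix.vecMul (u k) B with hCdef
  have hnullTB : ∀ x : Fin n → Quat, Matrix.vecMul x T₂ = 0 → Matrix.vecMul x B = 0 := by
    intro x hx
    have := Set.ext_iff.mp hNB x
    simp only [leftNull, Set.mem_setOf_eq] at this
    exact this.mpr hx
  have hfactor : ∀ x : Fin n → Quat,
      Matrix.vecMul (Matrix.vecMul x T₂) C = Matrix.vecMul x B := by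
    intro x
    set y := Matrix.vecMul x T₂ with hy
    set x' : Fin n → Quat := ∑ k, y k • u k with hx'
    have hx'T : Matrix.vecMul x' T₂ = y := by
      have : vl T₂ x' = ∑ k, y k • vl T₂ (u k) := by
        rw [hx', map_sum]
        simp only [_root_.map_smul]
      simp only [vl_apply, hu] at this
      rw [this, sum_single_smul]
    have hdiff : Matrix.vecMul (x - x') T₂ = 0 := by
      have := map_sub (vl T₂) x x'
      simp only [vl_apply] at this
      rw [this, hx'T, sub_self]
    have hdiffB := hnullTB _ hdiff
    have hxB : Matrix.vecMul x B = Matrix.vecMul x' B := by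
      have := map_sub (vl B) x x'
      simp only [vl_apply] at this
      rw [this] at hdiffB
      exact sub_eq_zero.mp hdiffB
    have hx'B : Matrix.vecMul x' B = ∑ k, y k • Matrix.vecMul (u k) B := by
      have : vl B x' = ∑ k, y k • vl B (u k) := by
        rw [hx', map_sum]
        simp only [_root_.map_smul]
      simpa only [vl_apply] using this
    rw [hxB, hx'B, vecMul_eq_sum']
  have hBC : B = T₂ * C := by
    apply Matrix.ext
    intro i j
    have h6 := hfactor (Pi.single i 1)
    rw [single_vecMul', single_vecMul'] at h6
    rw [show (T₂ * C) i = Matrix.vecMul (T₂ i) C from mul_row T₂ C i]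
    exact (congrFun h6 j).symm
  have hC1 : (S₂ * A * T₂) * C = 1 := by
    calc (S₂ * A * T₂) * C = S₂ * A * (T₂ * C) := by rw [Matrix.mul_assoc]
      _ = S₂ * A * B := by rw [← hBC]
      _ = 1 := hD
  have hC2 : C * (S₂ * A * T₂) = 1 := mul_one_comm' _ _ hC1
  refine ⟨⟨C, hC1, hC2⟩, ?_⟩
  intro Q hQ1 hQ2
  have hQC : Q = C := by
    calc Q = Q * ((S₂ * A * T₂) * C) := by rw [hC1, Matrix.mul_one]
      _ = (Q * (S₂ * A * T₂)) * C := (Matrix.mul_assoc Q _ C).symm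
      _ = C := by rw [hQ2, Matrix.one_mul]
  refine ⟨?_, ?_, hNT⟩
  · rw [hQC, hXB, hBC, Matrix.mul_assoc]
  · apply Set.eq_of_subset_of_subset
    · rintro y ⟨x, rfl⟩
      exact ⟨Matrix.vecMul x B, by rw [hXB, ← Matrix.vecMul_vecMul]⟩
    · rintro y ⟨z, rfl⟩
      refine ⟨Matrix.vecMul z (S₂ * A), ?_⟩
      rw [hXB, Matrix.vecMul_vecMul]
      congr 1
      rw [← Matrix.mul_assoc, hD, Matrix.one_mul]
end
end
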